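/- The series Δ := ∏_{α∈R₊}(1−e^{−α}) / (∏_{α∈R₊∖R̄₊}(1−(p+1)e^{−α}) ∏_{α∈R̄₊}(1−(q+1)e^{−α})) expands as Δ = Σ_{μ∈Q₊} K_{0,−μ}(p+1,q+1) e^{−μ}, and each coefficient K_{0,−μ}(p+1,q+1) lies in ℕ[p,q]. -/

import Mathlib

/-!
Expanding each factor `1 / (1 - y e^{-α})` geometrically, `Δ` is the Weyl numerator times the
generating series `∑_f w(f) e^{-∑ fⱼ αⱼ}` of multiplicity functions `f : R₊ → ℕ`, with the
multiplicative weight `w(f) = ∏ⱼ yⱼ^{fⱼ}`, `yⱼ ∈ {p+1, q+1}`. Its coefficient of `e^{-μ}` is thus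
a sum over the Kostant partitions `g` of `μ` of the mixed backward difference of `w` at `g`, which
factorises as `∏_{gⱼ ≠ 0} (yⱼ - 1) yⱼ^{gⱼ-1}`: this is the factorwise identity
`(1 - e^{-α}) / (1 - y e^{-α}) = 1 + ∑_{k ≥ 1} (y - 1) y^{k-1} e^{-kα}`, and `yⱼ - 1 ∈ {p, q}`
has natural coefficients. The Weyl denominator formula turns the same coefficient into the
alternating sum over `W` defining `K_{0,-μ}`.

The roots here are arbitrary vectors, and partition functions are finite sums taken as `0` on
infinite fibres. If `μ` has infinitely many partitions, Dickson's lemma gives a nonzero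
`ℕ`-relation among the roots, so every nonempty fibre is infinite and all coefficients vanish.
-/

open MvPolynomial

noncomputable section

variable {E : Type*} [AddCommGroup E] [Module ℝ E]

/-- The coefficient of `e^{-β}` in the product
`∏_{α ∈ R₊∖R̄₊} (1-(p+1)e^{-α})⁻¹ · ∏_{α ∈ R̄₊} (1-(q+1)e^{-α})⁻¹`,
where `r : J → E` enumerates the positive roots `R₊` and `Jbar` indexes the parabolic
subset `R̄₊`: a multiset of positive roots with multiplicity function `f` contributes
`(p+1)^{#roots outside R̄₊} (q+1)^{#roots in R̄₊}`.  This is the (p+1,q+1)-Kostant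
partition function `P_{p+1,q+1}(β)`, an element of `ℤ[p,q] = MvPolynomial (Fin 2) ℤ`. -/
def Npq {J : Type*} [Fintype J] [DecidableEq J] [DecidableEq E]
    (r : J → E) (Jbar : Finset J) (β : E) : MvPolynomial (Fin 2) ℤ :=
  ∑ᶠ f : J → ℕ,
    if (∑ j, f j • r j) = β then
      (X 0 + 1) ^ (∑ j ∈ Jbarᶜ, f j) * (X 1 + 1) ^ (∑ j ∈ Jbar, f j)
    else 0

/-- The coefficient of `e^{-β}` in the Weyl numerator `∏_{α ∈ R₊} (1 - e^{-α})`. -/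
def weylNum {J : Type*} [Fintype J] [DecidableEq E] (r : J → E) (β : E) : ℤ :=
  ∑ S : Finset J, if (∑ j ∈ S, r j) = β then (-1) ^ S.card else 0

section KostantPartitions

variable {J M : Type*} [Fintype J] [AddCommGroup M]

def kostantPartitions (r : J → M) (β : M) : Set (J → ℕ) := {f | ∑ j, f j • r j = β}

@[simp]
lemma mem_kostantPartitions {r : J → M} {β : M} {f : J → ℕ} :
    f ∈ kostantPartitions r β ↔ ∑ j, f j • r j = β := Iff.rfl

lemma sum_add_smul (f g : J → ℕ) (r : J → M) :
    ∑ j, (f + g) j • r j = ∑ j, f j • r j + ∑ j, g j • r j := by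
  simp only [Pi.add_apply, add_smul, Finset.sum_add_distrib]

lemma sum_indicator_one_smul (S : Finset J) (r : J → M) :
    ∑ j, (S : Set J).indicator (1 : J → ℕ) j • r j = ∑ j ∈ S, r j := by
  classical
  simp only [Set.indicator_apply, Finset.mem_coe, Pi.one_apply, ite_smul, one_smul, zero_smul]
  rw [Finset.sum_ite_mem, Finset.univ_inter]

lemma kostantPartitions_sub_sum (r : J → M) (μ : M) (S : Finset J) :
    kostantPartitions r (μ - ∑ j ∈ S, r j) =
      (· + (S : Set J).indicator 1) ⁻¹' kostantPartitions r μ := by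
  ext f
  simp only [Set.mem_preimage, mem_kostantPartitions, sum_add_smul, sum_indicator_one_smul,
    eq_sub_iff_add_eq]

lemma exists_relation_of_infinite {r : J → M} {μ : M}
    (hμ : (kostantPartitions r μ).Infinite) : ∃ d : J → ℕ, d ≠ 0 ∧ ∑ j, d j • r j = 0 := by
  set g := hμ.natEmbedding
  obtain ⟨m, n, hmn, hle⟩ := (Set.isPWO_of_wellQuasiOrderedLE _).exists_lt
    (f := fun k => (g k : J → ℕ)) fun k => (g k).2
  refine ⟨g n - g m, fun h => hmn.ne (g.injective (Subtype.ext ?_)), ?_⟩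
  · exact hle.antisymm (tsub_eq_zero_iff_le.mp h)
  · have h := (g n).2
    rw [← add_tsub_cancel_of_le hle, mem_kostantPartitions, sum_add_smul, (g m).2,
      add_eq_left] at h
    exact h

lemma kostantPartitions_infinite_of_relation {r : J → M} {β : M} {d f : J → ℕ} (hd : d ≠ 0)
    (hrel : ∑ j, d j • r j = 0) (hf : f ∈ kostantPartitions r β) :
    (kostantPartitions r β).Infinite := by
  obtain ⟨j, hj⟩ := Function.ne_iff.mp hd
  refine Set.infinite_of_injective_forall_mem (f := fun k : ℕ => f + k • d)
    (fun k l hkl => Nat.eq_of_mul_eq_mul_right (Nat.pos_of_ne_zero hj) ?_) fun k => ?_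
  · simpa using congrFun hkl j
  · simp only [mem_kostantPartitions, sum_add_smul, Pi.smul_apply, smul_eq_mul, mul_smul,
      ← Finset.smul_sum, hrel, smul_zero, add_zero]
    exact hf

lemma finsum_mem_kostantPartitions_eq_zero {R : Type*} [AddCommMonoid R] {r : J → M} {μ : M}
    (hμ : (kostantPartitions r μ).Infinite) {w : (J → ℕ) → R} (hw : ∀ f, w f ≠ 0) (β : M) :
    ∑ᶠ f ∈ kostantPartitions r β, w f = 0 := by
  obtain ⟨d, hd, hrel⟩ := exists_relation_of_infinite hμ
  obtain hβ | ⟨f, hf⟩ := (kostantPartitions r β).eq_empty_or_nonempty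
  · rw [hβ, finsum_mem_empty]
  · apply finsum_mem_eq_zero_of_infinite
    rw [Function.support_eq_univ hw, Set.inter_univ]
    exact kostantPartitions_infinite_of_relation hd hrel hf

end KostantPartitions

section BackwardDiff

variable {J R : Type*} [Fintype J]

/-- The mixed backward difference `∏ⱼ (1 - Tⱼ)` applied to `w` extended by zero outside `ℕ^J`,
where `Tⱼ` shifts the `j`-th coordinate by one. -/
def backwardDiff [Ring R] (w : (J → ℕ) → R) (g : J → ℕ) : R :=
  ∑ S : Finset J, if ∀ j ∈ S, g j ≠ 0 then
    (-1) ^ S.card * w (g - (S : Set J).indicator 1) else 0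

lemma backwardDiff_prod_pow [CommRing R] (y : J → R) (g : J → ℕ) :
    backwardDiff (fun f => ∏ j, y j ^ f j) g =
      ∏ j, if g j = 0 then 1 else (y j - 1) * y j ^ (g j - 1) := by
  classical
  set a : J → R := fun j => if g j = 0 then 0 else -y j ^ (g j - 1)
  have factor : ∀ j, (if g j = 0 then 1 else (y j - 1) * y j ^ (g j - 1)) = a j + y j ^ g j := by
    intro j
    by_cases hj : g j = 0
    · simp [a, hj]
    · obtain ⟨k, hk⟩ := Nat.exists_eq_succ_of_ne_zero hj
      simp only [a]
      rw [if_neg hj, if_neg hj, hk, Nat.succ_sub_one, pow_succ]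
      ring
  rw [Finset.prod_congr rfl fun j _ => factor j, Finset.prod_add, Finset.powerset_univ,
    backwardDiff]
  refine Finset.sum_congr rfl fun S _ => ?_
  split_ifs with hS
  · have ha : ∏ j ∈ S, a j = (-1) ^ S.card * ∏ j ∈ S, y j ^ (g j - 1) := by
      rw [← Finset.prod_const, ← Finset.prod_mul_distrib]
      exact Finset.prod_congr rfl fun j hj => by simp [a, hS j hj]
    rw [ha, mul_assoc, ← Finset.compl_eq_univ_sdiff, ← Finset.prod_mul_prod_compl S]
    congr 2
    · exact Finset.prod_congr rfl fun j hj => by simp [hj]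
    · exact Finset.prod_congr rfl fun j hj => by simp [Finset.mem_compl.mp hj]
  · obtain ⟨j, hj, hgj⟩ : ∃ j ∈ S, g j = 0 := by simpa using hS
    rw [Finset.prod_eq_zero hj (by simp [a, hgj]), zero_mul]

end BackwardDiff

section AlternatingSum

lemma indicator_one_le_iff {J : Type*} {S : Finset J} {g : J → ℕ} :
    (S : Set J).indicator 1 ≤ g ↔ ∀ j ∈ S, g j ≠ 0 := by
  classical
  simp only [Pi.le_def, Set.indicator_apply, Finset.mem_coe, Pi.one_apply]
  refine ⟨fun h j hj => ?_, fun h j => ?_⟩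
  · simpa [hj, Nat.one_le_iff_ne_zero] using h j
  · split_ifs with hj
    · exact Nat.one_le_iff_ne_zero.mpr (h j hj)
    · exact Nat.zero_le _

variable {J M : Type*} [Fintype J] [AddCommGroup M]

lemma finsum_mem_kostantPartitions_sub_sum {R : Type*} [AddCommMonoid R] {r : J → M} {μ : M}
    (hμ : (kostantPartitions r μ).Finite) (w : (J → ℕ) → R) (S : Finset J) :
    ∑ᶠ f ∈ kostantPartitions r (μ - ∑ j ∈ S, r j), w f =
      ∑ g ∈ hμ.toFinset, if ∀ j ∈ S, g j ≠ 0 then w (g - (S : Set J).indicator 1) else 0 := by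
  set shift : (J → ℕ) → J → ℕ := (· + (S : Set J).indicator 1)
  have hinj : Set.InjOn shift (shift ⁻¹' hμ.toFinset) := (add_left_injective _).injOn
  have hpre : kostantPartitions r (μ - ∑ j ∈ S, r j) = hμ.toFinset.preimage shift hinj := by
    rw [Finset.coe_preimage, hμ.coe_toFinset, kostantPartitions_sub_sum]
  rw [hpre, finsum_mem_coe_finset, ← Finset.sum_preimage shift _ hinj]
  · refine Finset.sum_congr rfl fun f _ => ?_
    rw [if_pos fun j hj => by simp [shift, hj], add_tsub_cancel_right]
  · intro g _ hg
    refine if_neg fun hS => hg ⟨g - (S : Set J).indicator 1, ?_⟩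
    exact tsub_add_cancel_of_le (indicator_one_le_iff.mpr hS)

lemma sum_neg_one_pow_mul_finsum_mem_kostantPartitions {R : Type*} [Ring R] {r : J → M}
    {w : (J → ℕ) → R} (hw : ∀ f, w f ≠ 0) (hdw : ∀ g, backwardDiff w g ≠ 0) (μ : M) :
    ∑ S : Finset J, (-1) ^ S.card * ∑ᶠ f ∈ kostantPartitions r (μ - ∑ j ∈ S, r j), w f =
      ∑ᶠ g ∈ kostantPartitions r μ, backwardDiff w g := by
  by_cases hμ : (kostantPartitions r μ).Finite
  · simp only [finsum_mem_kostantPartitions_sub_sum hμ, Finset.mul_sum, mul_ite, mul_zero]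
    rw [Finset.sum_comm, finsum_mem_eq_finite_toFinset_sum _ hμ]
    rfl
  · simp only [finsum_mem_kostantPartitions_eq_zero hμ hw,
      finsum_mem_kostantPartitions_eq_zero hμ hdw, mul_zero, Finset.sum_const_zero]

end AlternatingSum

lemma finsum_sum_ite_mul {ι M R : Type*} [Fintype ι] [DecidableEq M] [Semiring R]
    (a : ι → R) (b : ι → M) (G : M → R) :
    ∑ᶠ β, (∑ i, if b i = β then a i else 0) * G β = ∑ i, a i * G (b i) := by
  simp only [Finset.sum_mul, ite_mul, zero_mul]
  rw [finsum_sum_comm]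
  · exact Finset.sum_congr rfl fun i _ =>
      (finsum_eq_single _ (b i) fun β hβ => if_neg (Ne.symm hβ)).trans (if_pos rfl)
  · intro i _
    refine (Set.finite_singleton (b i)).subset fun β hβ => ?_
    by_contra h
    exact hβ (if_neg (Ne.symm h))

lemma X_add_one_ne_zero {σ R : Type*} [CommSemiring R] [Nontrivial R] (i : σ) :
    (X i + 1 : MvPolynomial σ R) ≠ 0 := fun h => by
  simpa using congrArg (eval 0) h

lemma coeff_finsum_mem_map_natCast_nonneg {σ α : Type*} (s : Set α)
    (P : α → MvPolynomial σ ℕ) (m : σ →₀ ℕ) :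
    0 ≤ coeff m (∑ᶠ a ∈ s, map (Nat.castRingHom ℤ) (P a)) :=
  finsum_mem_induction (fun Q => 0 ≤ coeff m Q) (by simp)
    (fun Q₁ Q₂ h₁ h₂ => by simpa only [coeff_add] using add_nonneg h₁ h₂)
    fun a _ => by simp only [coeff_map, eq_natCast, Int.natCast_nonneg]

section PartitionFunction

variable {J : Type*} [Fintype J] [DecidableEq J]

/-- `X 0` stands for `p` (roots outside `R̄₊`) and `X 1` for `q` (roots in `R̄₊`). -/
def rootVar (Jbar : Finset J) (j : J) : Fin 2 := if j ∈ Jbar then 1 else 0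

/-- The coefficient of `e^{-∑ⱼ gⱼ αⱼ}` in `∏ⱼ (1 - e^{-αⱼ}) / (1 - yⱼ e^{-αⱼ})`, where
`yⱼ = X (rootVar Jbar j) + 1`. -/
def positiveWeight (Jbar : Finset J) (g : J → ℕ) : MvPolynomial (Fin 2) ℕ :=
  ∏ j, if g j = 0 then 1 else X (rootVar Jbar j) * (X (rootVar Jbar j) + 1) ^ (g j - 1)

variable {V : Type*} [AddCommGroup V] [DecidableEq V]

lemma Npq_eq_finsum_mem (r : J → V) (Jbar : Finset J) (β : V) :
    Npq r Jbar β = ∑ᶠ f ∈ kostantPartitions r β, ∏ j, (X (rootVar Jbar j) + 1) ^ f j := by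
  rw [Npq, finsum_mem_def]
  refine finsum_congr fun f => ?_
  by_cases hf : ∑ j, f j • r j = β
  · rw [if_pos hf, Set.indicator_of_mem (show f ∈ kostantPartitions r β from hf),
      ← Finset.prod_mul_prod_compl Jbar, mul_comm,
      ← Finset.prod_pow_eq_pow_sum, ← Finset.prod_pow_eq_pow_sum]
    congr 1 <;> refine Finset.prod_congr rfl fun j hj => ?_
    · simp [rootVar, hj]
    · simp [rootVar, Finset.mem_compl.mp hj]
  · rw [if_neg hf, Set.indicator_of_notMem (show f ∉ kostantPartitions r β from hf)]

lemma sum_C_mul_Npq_sub_sum (r : J → V) (Jbar : Finset J) (μ : V) :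
    ∑ S : Finset J, C ((-1 : ℤ) ^ S.card) * Npq r Jbar (μ - ∑ j ∈ S, r j) =
      ∑ᶠ g ∈ kostantPartitions r μ, map (Nat.castRingHom ℤ) (positiveWeight Jbar g) := by
  have hw (f : J → ℕ) : ∏ j, (X (rootVar Jbar j) + 1 : MvPolynomial (Fin 2) ℤ) ^ f j ≠ 0 :=
    Finset.prod_ne_zero_iff.mpr fun j _ => pow_ne_zero _ (X_add_one_ne_zero _)
  have hdw (g : J → ℕ) :
      backwardDiff (fun f => ∏ j, (X (rootVar Jbar j) + 1 : MvPolynomial (Fin 2) ℤ) ^ f j) g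
        ≠ 0 := by
    rw [backwardDiff_prod_pow, Finset.prod_ne_zero_iff]
    intro j _
    split_ifs
    · exact one_ne_zero
    · rw [add_sub_cancel_right]
      exact mul_ne_zero (X_ne_zero _) (pow_ne_zero _ (X_add_one_ne_zero _))
  simp only [Npq_eq_finsum_mem, map_pow, map_neg, map_one,
    sum_neg_one_pow_mul_finsum_mem_kostantPartitions hw hdw, backwardDiff_prod_pow,
    add_sub_cancel_right, positiveWeight, map_prod, apply_ite (map (Nat.castRingHom ℤ)), map_one,
    map_mul, map_pow, map_add, map_X]

end PartitionFunction

/-- Theorem `Th_dooublePan`, part 1.  The series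
`Δ = ∏_{α∈R₊}(1−e^{−α}) / (∏_{α∈R₊∖R̄₊}(1−(p+1)e^{−α}) ∏_{α∈R̄₊}(1−(q+1)e^{−α}))`
expands as `Δ = Σ_{μ∈Q₊} K_{0,−μ}(p+1,q+1) e^{−μ}`, where
`K_{0,−μ}(p+1,q+1) = Σ_{w∈W} ε(w) P_{p+1,q+1}(w(ρ)−ρ+μ)`; and each coefficient
`K_{0,−μ}(p+1,q+1)` lies in `ℕ[p,q]`.  The expansion is stated coefficientwise: the
coefficient of `e^{-μ}` in `Δ` is the convolution of the coefficients of the Weyl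
numerator (given by the Weyl denominator formula, hypothesis `hWD`) with `N_{p,q}`. -/
theorem stmt10 {J : Type*} [Fintype J] [DecidableEq J] [DecidableEq E]
    (r : J → E) (Jbar : Finset J)
    (W : Subgroup (E ≃ₗ[ℝ] E)) [Fintype W] (ε : (E ≃ₗ[ℝ] E) → ℤ) (ρ : E)
    -- Weyl denominator formula: ∏_{α∈R₊}(1−e^{−α}) = Σ_{w∈W} ε(w) e^{w(ρ)−ρ}
    (hWD : ∀ β : E, weylNum r β =
      ∑ w : W, if ρ - (w : E ≃ₗ[ℝ] E) ρ = β then ε w else 0)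
    (K0 : E → MvPolynomial (Fin 2) ℤ)
    (hK0 : ∀ μ : E, K0 μ =
      ∑ w : W, C (ε w) * Npq r Jbar ((w : E ≃ₗ[ℝ] E) ρ - ρ + μ)) :
    (∀ μ : E, (∑ᶠ β : E, C (weylNum r β) * Npq r Jbar (μ - β)) = K0 μ) ∧
      ∀ (μ : E) (m : Fin 2 →₀ ℕ), 0 ≤ MvPolynomial.coeff m (K0 μ) := by
  have expansion (μ : E) : ∑ᶠ β : E, C (weylNum r β) * Npq r Jbar (μ - β) = K0 μ := by
    simp only [hWD, map_sum, apply_ite C, map_zero]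
    rw [finsum_sum_ite_mul, hK0]
    exact Finset.sum_congr rfl fun w _ => by congr 2; abel
  refine ⟨expansion, fun μ m => ?_⟩
  rw [← expansion μ]
  simp only [weylNum, map_sum, apply_ite C, map_zero]
  rw [finsum_sum_ite_mul, sum_C_mul_Npq_sub_sum]
  exact coeff_finsum_mem_map_natCast_nonneg _ _ m

end
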